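/- Let l, u be integers with l < u, and let x be uniformly distributed on [l, u). Then for any Δ in (0, 1/2), E[⌊x+Δ⌉] − E[⌊x−Δ⌉] − 2Δ = 0, where ⌊·⌉ denotes rounding to the nearest integer (⌊y⌉ = ⌊y + 1/2⌋). -/

import Mathlib

open MeasureTheory Set

/-! Since `⌊y⌋ = y - fract y` and `fract` is `1`-periodic with mean `1/2` over a period, over an
interval of integer length `n` the integral of `⌊x + c⌋` is that of `x + c` minus `n/2`. The two
rounded integrals therefore differ exactly by `n` times the shift `2Δ`. -/

lemma intervalIntegrable_fract (a b : ℝ) : IntervalIntegrable Int.fract volume a b :=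
  (continuous_id.intervalIntegrable a b).sub
    (Monotone.intervalIntegrable fun _ _ hxy => Int.cast_le.2 (Int.floor_mono hxy))

lemma integral_fract_zero_one : ∫ x in (0 : ℝ)..1, Int.fract x = 1 / 2 := by
  rw [intervalIntegral.integral_of_le zero_le_one, ← integral_Ico_eq_integral_Ioc,
    setIntegral_congr_fun measurableSet_Ico fun x hx => Int.fract_eq_self.2 hx,
    integral_Ico_eq_integral_Ioc, ← intervalIntegral.integral_of_le zero_le_one, integral_id]
  norm_num

lemma integral_fract_add_intCast (t : ℝ) (n : ℤ) :
    ∫ x in t..t + n, Int.fract x = n / 2 := by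
  have h := (Int.fract_periodic ℝ).intervalIntegral_add_zsmul_eq n t intervalIntegrable_fract
  rw [zsmul_one, zsmul_eq_mul, (Int.fract_periodic ℝ).intervalIntegral_add_eq t 0, zero_add,
    integral_fract_zero_one] at h
  linarith

lemma integral_floor_add (t c : ℝ) (n : ℤ) :
    ∫ x in t..t + n, (⌊x + c⌋ : ℝ) = n * (t + c + (n - 1) / 2) := by
  simp_rw [← Int.self_sub_fract]
  rw [intervalIntegral.integral_sub ((continuous_add_const c).intervalIntegrable _ _)
      (by simpa using (intervalIntegrable_fract (t + c) (t + n + c)).comp_add_right c),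
    intervalIntegral.integral_comp_add_right (fun x => x),
    intervalIntegral.integral_comp_add_right Int.fract, add_right_comm,
    integral_fract_add_intCast, integral_id]
  ring

lemma integral_round_add (t c : ℝ) (n : ℤ) :
    ∫ x in t..t + n, (round (x + c) : ℝ) = n * (t + c + n / 2) := by
  simp_rw [round_eq, add_assoc, integral_floor_add]
  ring

theorem stmt0_general (l u : ℤ) (hlu : l < u) (Δ : ℝ) :
    ((u : ℝ) - l)⁻¹ * (∫ x in Ico (l : ℝ) u, (round (x + Δ) : ℝ))
      - ((u : ℝ) - l)⁻¹ * (∫ x in Ico (l : ℝ) u, (round (x - Δ) : ℝ))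
      - 2 * Δ = 0 := by
  obtain ⟨n, hn, rfl⟩ : ∃ n : ℤ, 0 < n ∧ u = l + n := ⟨u - l, by omega, by omega⟩
  have hn' : (n : ℝ) ≠ 0 := by exact_mod_cast hn.ne'
  have hle : (l : ℝ) ≤ l + n := le_add_of_nonneg_right (by exact_mod_cast hn.le)
  push_cast
  simp_rw [integral_Ico_eq_integral_Ioc, ← intervalIntegral.integral_of_le hle, sub_eq_add_neg _ Δ, integral_round_add, add_sub_cancel_left]
  field_simp
  ring

/-- For `x ~ Unif[l,u)` with integers `l < u` and `Δ ∈ (0, 1/2)`,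
`E[⌊x+Δ⌉] − E[⌊x−Δ⌉] − 2Δ = 0`, where `⌊·⌉` is `round` (round to nearest). -/
theorem stmt0 (l u : ℤ) (hlu : l < u) (Δ : ℝ) (hΔ0 : 0 < Δ) (hΔ : Δ < 1/2) :
    ((u : ℝ) - l)⁻¹ * (∫ x in Ico (l : ℝ) u, (round (x + Δ) : ℝ))
      - ((u : ℝ) - l)⁻¹ * (∫ x in Ico (l : ℝ) u, (round (x - Δ) : ℝ))
      - 2 * Δ = 0 :=
  stmt0_general l u hlu Δ
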